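/- Let X = ℂ/Λ be a complex elliptic curve and let ℘ be its Weierstrass function. Fix x ∈ ℂ and consider f(p,q,x) = θ(p+q−x)θ(q+x−p)/(θ(q−x−p)θ(q+x+p)). Then f'_p := ∂f/∂p, viewed as a function of q, is an elliptic function with poles of order 2 exactly at q ≡ ±(x+p) mod Λ, and consequently there exists a polynomial P(v) of degree 2 in v (with coefficients depending on p, x) such that f'_p = P(f) as meromorphic functions of q. -/

import Mathlib

open Complex Filter

/-- Membership in the lattice `Λ = ℤ + ℤτ`. -/
def InLattice (τ z : ℂ) : Prop := ∃ m n : ℤ, z = (m : ℂ) + (n : ℂ) * τ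

/-!
As a function of `q`, `f` is even and `Λ`-periodic with simple poles exactly at `q ≡ ±(x+p)`.
Differentiating in `p` moves the pole, so `f'_p` has double poles there, and at `s = x + p` the
coefficient of `(q - s)⁻²` in `f'_p` equals the residue of `f`. Hence there are `α ≠ 0` and `β`
for which `f'_p - α f² - β f` has a removable singularity at `s`; by evenness and periodicity the
same holds at every pole, so this function extends to a bounded entire function, which is
constant by Liouville's theorem.
-/

open Function Set Topology

section DoublyPeriodic

variable {E : Type*} [NormedAddCommGroup E] [NormedSpace ℂ E] {τ : ℂ}

lemma exists_eq_ofReal_add_ofReal_mul (hτ : τ.im ≠ 0) (z : ℂ) :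
    ∃ a b : ℝ, z = a + b * τ :=
  ⟨z.re - z.im / τ.im * τ.re, z.im / τ.im, by
    apply Complex.ext <;> simp
    field_simp⟩

theorem Differentiable.apply_eq_apply_of_periodic {f : ℂ → E} (hf : Differentiable ℂ f)
    (hτ : τ.im ≠ 0) (h1 : Periodic f 1) (hτf : Periodic f τ) (z w : ℂ) : f z = f w := by
  refine hf.apply_eq_apply_of_bounded ?_ z w
  have hK : IsCompact ((fun ab : ℝ × ℝ => (ab.1 : ℂ) + ab.2 * τ) '' Icc 0 1 ×ˢ Icc 0 1) :=
    (isCompact_Icc.prod isCompact_Icc).image (by fun_prop)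
  refine (hK.image hf.continuous).isBounded.subset ?_
  rintro _ ⟨z, rfl⟩
  obtain ⟨a, b, rfl⟩ := exists_eq_ofReal_add_ofReal_mul hτ z
  refine ⟨_, ⟨(Int.fract a, Int.fract b), ⟨⟨Int.fract_nonneg a, (Int.fract_lt_one a).le⟩,
    ⟨Int.fract_nonneg b, (Int.fract_lt_one b).le⟩⟩, rfl⟩, ?_⟩
  rw [← (h1.int_mul ⌊a⌋).add_period (hτf.int_mul ⌊b⌋)]
  simp only [Int.fract]
  push_cast
  ring_nf

lemma limUnder_nhdsNE_eventuallyEq {X Y : Type*} [TopologicalSpace X] [T1Space X]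
    [∀ x : X, (𝓝[≠] x).NeBot] [TopologicalSpace Y] [T2Space Y] [Nonempty Y] {G M : X → Y}
    {z : X} (hM : ∀ᶠ w in 𝓝 z, ContinuousAt M w) (hGM : G =ᶠ[𝓝[≠] z] M) :
    (fun w => limUnder (𝓝[≠] w) G) =ᶠ[𝓝 z] M := by
  have hloc : ∀ᶠ w in 𝓝 z, G =ᶠ[𝓝[≠] w] M := by
    rw [← nhdsNE_sup_pure, eventually_sup, eventually_pure]
    refine ⟨?_, hGM⟩
    filter_upwards [eventually_nhdsNE_eventually_nhds_iff.2 hGM] with w hw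
    exact hw.filter_mono nhdsWithin_le_nhds
  filter_upwards [hloc, hM] with w hw hMw
  exact ((hMw.tendsto.mono_left nhdsWithin_le_nhds).congr' hw.symm).limUnder_eq

def HasRemovableSingularityAt (f : ℂ → E) (z : ℂ) : Prop :=
  ∃ M : ℂ → E, AnalyticAt ℂ M z ∧ f =ᶠ[𝓝[≠] z] M

theorem exists_eq_const_of_periodic_of_removable [CompleteSpace E] (hτ : τ.im ≠ 0) {G : ℂ → E}
    (h1 : Periodic G 1) (hτG : Periodic G τ) (hG : ∀ z, HasRemovableSingularityAt G z) :
    ∃ c, ∀ z, ContinuousAt G z → G z = c := by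
  set G' : ℂ → E := fun w => limUnder (𝓝[≠] w) G
  have hdiff : Differentiable ℂ G' := fun z => by
    obtain ⟨M, hM, hGM⟩ := hG z
    have hG'M := limUnder_nhdsNE_eventuallyEq
      (hM.eventually_analyticAt.mono fun _ h => h.continuousAt) hGM
    exact hG'M.differentiableAt_iff.2 hM.differentiableAt
  have hper : ∀ c, Periodic G c → Periodic G' c := fun c hc w => by
    simp only [G', limUnder, ← map_add_right_nhdsNE, map_map, show G ∘ (· + c) = G from funext hc]
  refine ⟨G' 0, fun z hz => ?_⟩
  rw [← hdiff.apply_eq_apply_of_periodic hτ (hper 1 h1) (hper τ hτG) z 0]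
  exact ((hz.tendsto.mono_left nhdsWithin_le_nhds).limUnder_eq).symm

structure IsEvenDoublyPeriodic {X : Type*} (τ : ℂ) (f : ℂ → X) : Prop where
  periodic_one : Periodic f 1
  periodic_tau : Periodic f τ
  even : Function.Even f

lemma IsEvenDoublyPeriodic.comp₂ {X Y Z : Type*} {f : ℂ → X} {g : ℂ → Y}
    (hf : IsEvenDoublyPeriodic τ f) (hg : IsEvenDoublyPeriodic τ g) (op : X → Y → Z) :
    IsEvenDoublyPeriodic τ fun q => op (f q) (g q) where
  periodic_one q := by simp only [hf.periodic_one q, hg.periodic_one q]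
  periodic_tau q := by simp only [hf.periodic_tau q, hg.periodic_tau q]
  even q := by simp only [hf.even q, hg.even q]

lemma IsEvenDoublyPeriodic.exists_affine_eq {X : Type*} {f : ℂ → X} (hf : IsEvenDoublyPeriodic τ f)
    {s q₀ : ℂ} (hq₀ : InLattice τ (q₀ - s) ∨ InLattice τ (q₀ + s)) :
    ∃ a b : ℂ, a ≠ 0 ∧ a * q₀ + b = s ∧ (fun q => f (a * q + b)) = f := by
  have hΛ : ∀ l, InLattice τ l → Periodic f l := by
    rintro _ ⟨m, n, rfl⟩
    simpa using (hf.periodic_one.int_mul m).add_period (hf.periodic_tau.int_mul n)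
  rcases hq₀ with hl | hl
  · exact ⟨1, s - q₀, one_ne_zero, by ring, funext fun q => by
      rw [← (hΛ _ hl).sub_eq q]
      ring_nf⟩
  · exact ⟨-1, q₀ + s, by norm_num, by ring, funext fun q => by
      rw [neg_one_mul, neg_add_eq_sub, ← (hΛ _ hl).sub_eq, ← hf.even q]
      ring_nf⟩

lemma tendsto_affine_nhdsNE {a b z : ℂ} (ha : a ≠ 0) :
    Tendsto (fun q => a * q + b) (𝓝[≠] z) (𝓝[≠] (a * z + b)) :=
  (by simpa using ((hasDerivAt_id z).const_mul a).add_const b : HasDerivAt _ a z).tendsto_nhdsNE ha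

lemma HasRemovableSingularityAt.comp_affine {f : ℂ → E} {a b z : ℂ} (ha : a ≠ 0)
    (hf : HasRemovableSingularityAt f (a * z + b)) :
    HasRemovableSingularityAt (fun q => f (a * q + b)) z :=
  let ⟨M, hM, hfM⟩ := hf
  ⟨fun q => M (a * q + b), hM.comp_of_eq (by fun_prop) rfl,
    hfM.comp_tendsto (tendsto_affine_nhdsNE ha)⟩

def HasDoublePoleAt (f : ℂ → ℂ) (z : ℂ) : Prop :=
  ∃ h : ℂ → ℂ, AnalyticAt ℂ h z ∧ h z ≠ 0 ∧ ∀ᶠ q in 𝓝[≠] z, f q = h q / (q - z) ^ 2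

lemma HasDoublePoleAt.comp_affine {f : ℂ → ℂ} {a b z : ℂ} (ha : a ≠ 0)
    (hf : HasDoublePoleAt f (a * z + b)) : HasDoublePoleAt (fun q => f (a * q + b)) z := by
  obtain ⟨h, hh, hh0, hfh⟩ := hf
  refine ⟨fun q => h (a * q + b) / a ^ 2,
    (hh.comp_of_eq (f := fun q => a * q + b) (by fun_prop) rfl).div_const,
    div_ne_zero hh0 (pow_ne_zero 2 ha), ?_⟩
  filter_upwards [(tendsto_affine_nhdsNE ha).eventually hfh] with q hq
  rw [hq, show a * q + b - (a * z + b) = a * (q - z) by ring, mul_pow, div_div]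

lemma HasRemovableSingularityAt.of_inLattice {f : ℂ → E} {s q₀ : ℂ}
    (hf : HasRemovableSingularityAt f s) (hsym : IsEvenDoublyPeriodic τ f)
    (hq₀ : InLattice τ (q₀ - s) ∨ InLattice τ (q₀ + s)) : HasRemovableSingularityAt f q₀ := by
  obtain ⟨a, b, ha, rfl, hab⟩ := hsym.exists_affine_eq hq₀
  exact hab ▸ hf.comp_affine ha

lemma HasDoublePoleAt.of_inLattice {f : ℂ → ℂ} {s q₀ : ℂ} (hf : HasDoublePoleAt f s)
    (hsym : IsEvenDoublyPeriodic τ f) (hq₀ : InLattice τ (q₀ - s) ∨ InLattice τ (q₀ + s)) :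
    HasDoublePoleAt f q₀ := by
  obtain ⟨a, b, ha, rfl, hab⟩ := hsym.exists_affine_eq hq₀
  exact hab ▸ hf.comp_affine ha

lemma AnalyticAt.dslope {f : ℂ → E} {a : ℂ} (hf : AnalyticAt ℂ f a) : AnalyticAt ℂ (dslope f a) a :=
  let ⟨_, hp⟩ := hf
  ⟨_, hp.has_fpower_series_dslope_fslope⟩

end DoublyPeriodic

theorem exists_quadratic_sub_hasRemovableSingularityAt {h H : ℂ → ℂ} {s : ℂ}
    (hh : AnalyticAt ℂ h s) (hH : AnalyticAt ℂ H s) (hhH : h s = H s) (hH0 : H s ≠ 0) :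
    ∃ α β : ℂ, α ≠ 0 ∧ HasRemovableSingularityAt
      (fun q => h q / (q - s) ^ 2 - (α * (H q / (q - s)) ^ 2 + β * (H q / (q - s)))) s := by
  -- `α = (H s)⁻¹` cancels the double pole, `β` the residue that is left.
  set β := (deriv h s - 2 * deriv H s) / H s with hβ
  set m : ℂ → ℂ := fun q => h q - (H s)⁻¹ * H q ^ 2 - β * ((q - s) * H q)
  have hm : AnalyticAt ℂ m s := by fun_prop
  have hm0 : m s = 0 := by simp only [m, hhH]; field_simp; ring
  have hm'0 : deriv m s = 0 := by
    have hH' := hH.differentiableAt.hasDerivAt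
    have hderiv : HasDerivAt m _ s := (hh.differentiableAt.hasDerivAt.sub
      ((hH'.pow 2).const_mul (H s)⁻¹)).sub ((((hasDerivAt_id s).sub_const s).mul hH').const_mul β)
    rw [hderiv.deriv, hβ]
    simp only [Nat.cast_ofNat, Nat.add_one_sub_one, pow_one, one_mul, id_eq, sub_self, zero_mul,
      add_zero]
    field_simp
    ring
  refine ⟨(H s)⁻¹, β, inv_ne_zero hH0, dslope (dslope m s) s, hm.dslope.dslope, ?_⟩
  filter_upwards [self_mem_nhdsWithin] with q hq
  have hq : q - s ≠ 0 := sub_ne_zero.2 hq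
  have hfac : (q - s) ^ 2 * dslope (dslope m s) s q = m q := by
    simpa using pow_sub_smul_iterate_dslope_of_zero 2 (f := m) (a := s)
      (by intro k hk; interval_cases k <;> simp [hm0, hm'0]) q
  rw [← mul_right_inj' (pow_ne_zero 2 hq), hfac]
  simp only [m]
  field_simp
  ring

section ThetaRatio

variable {θ : ℂ → ℂ} {τ x p q : ℂ}

-- `thetaRatio θ x p q` is `f(p,q,x)`, and `thetaRatioDeriv θ x p q` is `f'_p`.
noncomputable def thetaRatio (θ : ℂ → ℂ) (x p q : ℂ) : ℂ :=
  θ (p + q - x) * θ (q + x - p) / (θ (q - x - p) * θ (q + x + p))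

noncomputable def thetaRatioDeriv (θ : ℂ → ℂ) (x p q : ℂ) : ℂ :=
  deriv (fun p' => thetaRatio θ x p' q) p

noncomputable def thetaRatioDerivNum (θ : ℂ → ℂ) (x p q : ℂ) : ℂ :=
  (deriv θ (p + q - x) * θ (q + x - p) - θ (p + q - x) * deriv θ (q + x - p)) *
      (θ (q - x - p) * θ (q + x + p)) +
    θ (p + q - x) * θ (q + x - p) *
      (deriv θ (q - x - p) * θ (q + x + p) - θ (q - x - p) * deriv θ (q + x + p))

lemma isEvenDoublyPeriodic_thetaRatio (hθodd : ∀ z, θ (-z) = -θ z) (hθ1 : ∀ z, θ (z + 1) = -θ z)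
    (hθτ : ∀ z, θ (z + τ) = -cexp (-(Real.pi : ℂ) * I * (τ + 2 * z)) * θ z) (x p : ℂ) :
    IsEvenDoublyPeriodic τ (thetaRatio θ x p) where
  periodic_one q := by
    rw [thetaRatio, thetaRatio, show p + (q + 1) - x = p + q - x + 1 by ring,
      show q + 1 + x - p = q + x - p + 1 by ring, show q + 1 - x - p = q - x - p + 1 by ring,
      show q + 1 + x + p = q + x + p + 1 by ring]
    simp only [hθ1]
    ring
  periodic_tau q := by
    set e : ℂ → ℂ := fun z => cexp (-(Real.pi : ℂ) * I * (τ + 2 * z))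
    have hθe : ∀ z, θ (z + τ) = -e z * θ z := hθτ
    have he : e (p + q - x) * e (q + x - p) = e (q - x - p) * e (q + x + p) := by
      simp only [e, ← Complex.exp_add]
      ring_nf
    have he0 : e (q - x - p) * e (q + x + p) ≠ 0 := mul_ne_zero (exp_ne_zero _) (exp_ne_zero _)
    rw [thetaRatio, thetaRatio, show p + (q + τ) - x = p + q - x + τ by ring,
      show q + τ + x - p = q + x - p + τ by ring, show q + τ - x - p = q - x - p + τ by ring,
      show q + τ + x + p = q + x + p + τ by ring]
    simp only [hθe]
    calc _ = e (p + q - x) * e (q + x - p) * (θ (p + q - x) * θ (q + x - p)) /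
          (e (q - x - p) * e (q + x + p) * (θ (q - x - p) * θ (q + x + p))) := by ring
      _ = _ := by rw [he, mul_div_mul_left _ _ he0]
  even q := by
    rw [thetaRatio, thetaRatio, show p + -q - x = -(q + x - p) by ring,
      show -q + x - p = -(p + q - x) by ring, show -q - x - p = -(q + x + p) by ring,
      show -q + x + p = -(q - x - p) by ring]
    simp only [hθodd]
    ring

lemma IsEvenDoublyPeriodic.thetaRatioDeriv (h : ∀ p', IsEvenDoublyPeriodic τ (thetaRatio θ x p'))
    (p : ℂ) :
    IsEvenDoublyPeriodic τ (thetaRatioDeriv θ x p) where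
  periodic_one q := congrArg (deriv · p) (funext fun p' => (h p').periodic_one q)
  periodic_tau q := congrArg (deriv · p) (funext fun p' => (h p').periodic_tau q)
  even q := congrArg (deriv · p) (funext fun p' => (h p').even q)

lemma hasDerivAt_thetaRatio (hθ : Differentiable ℂ θ) (hc : θ (q - x - p) ≠ 0)
    (hd : θ (q + x + p) ≠ 0) :
    HasDerivAt (fun p' => thetaRatio θ x p' q)
      (thetaRatioDerivNum θ x p q / (θ (q - x - p) * θ (q + x + p)) ^ 2) p := by
  have hθ' : ∀ {c : ℂ → ℂ} {c' : ℂ}, HasDerivAt c c' p →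
      HasDerivAt (fun p' => θ (c p')) (deriv θ (c p) * c') p :=
    fun h => (hθ _).hasDerivAt.comp p h
  have ha := hθ' (((hasDerivAt_id p).add_const q).sub_const x)
  have hb := hθ' ((hasDerivAt_id p).const_sub (q + x))
  have hc' := hθ' ((hasDerivAt_id p).const_sub (q - x))
  have hd' := hθ' ((hasDerivAt_id p).const_add (q + x))
  refine ((ha.mul hb).div (hc'.mul hd') (mul_ne_zero hc hd)).congr_deriv ?_
  simp only [thetaRatioDerivNum, id, Pi.mul_apply]
  ring

lemma thetaRatioDeriv_eq (hθ : Differentiable ℂ θ) (hc : θ (q - x - p) ≠ 0)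
    (hd : θ (q + x + p) ≠ 0) :
    thetaRatioDeriv θ x p q =
      thetaRatioDerivNum θ x p q / (θ (q - x - p) * θ (q + x + p)) ^ 2 :=
  (hasDerivAt_thetaRatio hθ hc hd).deriv

lemma analyticAt_thetaRatio (hθ : Differentiable ℂ θ) (hc : θ (q - x - p) ≠ 0)
    (hd : θ (q + x + p) ≠ 0) : AnalyticAt ℂ (thetaRatio θ x p) q := by
  have hθa := hθ.analyticAt
  unfold thetaRatio
  fun_prop (disch := exact mul_ne_zero hc hd)

lemma analyticAt_thetaRatioDeriv (hθ : Differentiable ℂ θ) (hc : θ (q - x - p) ≠ 0)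
    (hd : θ (q + x + p) ≠ 0) : AnalyticAt ℂ (thetaRatioDeriv θ x p) q := by
  have hθa := hθ.analyticAt
  have hclosed : AnalyticAt ℂ
      (fun q => thetaRatioDerivNum θ x p q / (θ (q - x - p) * θ (q + x + p)) ^ 2) q := by
    unfold thetaRatioDerivNum
    fun_prop (disch := exact pow_ne_zero 2 (mul_ne_zero hc hd))
  refine hclosed.congr ?_
  have hcont : ContinuousAt (fun q => θ (q - x - p) * θ (q + x + p)) q := by fun_prop
  filter_upwards [hcont.eventually_ne (mul_ne_zero hc hd)] with q hq
  exact (thetaRatioDeriv_eq hθ (left_ne_zero_of_mul hq) (right_ne_zero_of_mul hq)).symm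

lemma exists_thetaRatio_laurent (hθ : Differentiable ℂ θ) (hθ0 : θ 0 = 0)
    (hθ'0 : deriv θ 0 ≠ 0) (h2p : θ (2 * p) ≠ 0) (h2x : θ (2 * x) ≠ 0)
    (h2s : θ (2 * (p + x)) ≠ 0) :
    ∃ h H : ℂ → ℂ, AnalyticAt ℂ h (x + p) ∧ AnalyticAt ℂ H (x + p) ∧ h (x + p) = H (x + p) ∧
      H (x + p) ≠ 0 ∧ ∀ᶠ q in 𝓝[≠] (x + p), thetaRatioDeriv θ x p q = h q / (q - (x + p)) ^ 2 ∧
        thetaRatio θ x p q = H q / (q - (x + p)) := by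
  set ϑ := dslope θ 0
  have hϑ : Differentiable ℂ ϑ :=
    differentiableOn_univ.1 ((Complex.differentiableOn_dslope univ_mem).2 hθ.differentiableOn)
  have hθϑ : ∀ w, θ w = w * ϑ w := fun w => by simpa using (sub_smul_dslope_of_zero hθ0 w).symm
  set D : ℂ → ℂ := fun q => ϑ (q - x - p) * θ (q + x + p)
  have hDs : D (x + p) = deriv θ 0 * θ (2 * (p + x)) := by
    simp only [D, show x + p - x - p = 0 by ring, show x + p + x + p = 2 * (p + x) by ring, ϑ,
      dslope_same]
  have hD0 : D (x + p) ≠ 0 := hDs ▸ mul_ne_zero hθ'0 h2s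
  have hθa := hθ.analyticAt
  have hϑa := hϑ.analyticAt
  have hD : AnalyticAt ℂ D (x + p) := by fun_prop
  have hargs : p + (x + p) - x = 2 * p ∧ x + p + x - p = 2 * x := by constructor <;> ring
  refine ⟨fun q => thetaRatioDerivNum θ x p q / D q ^ 2,
    fun q => θ (p + q - x) * θ (q + x - p) / D q, ?_, by fun_prop (disch := exact hD0), ?_, ?_, ?_⟩
  · unfold thetaRatioDerivNum
    fun_prop (disch := exact pow_ne_zero 2 hD0)
  · simp only [thetaRatioDerivNum, hargs, show x + p - x - p = 0 by ring,
      show x + p + x + p = 2 * (p + x) by ring, hθ0, hDs]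
    field_simp
    ring
  · simpa only [hargs] using div_ne_zero (mul_ne_zero h2p h2x) hD0
  · filter_upwards [nhdsWithin_le_nhds (hD.continuousAt.eventually_ne hD0), self_mem_nhdsWithin]
      with q hDq hq
    have hcd : θ (q - x - p) * θ (q + x + p) = (q - (x + p)) * D q := by
      rw [hθϑ (q - x - p)]
      ring
    have hcd0 : θ (q - x - p) * θ (q + x + p) ≠ 0 := hcd ▸ mul_ne_zero (sub_ne_zero.2 hq) hDq
    rw [thetaRatioDeriv_eq hθ (left_ne_zero_of_mul hcd0) (right_ne_zero_of_mul hcd0), thetaRatio,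
      hcd]
    constructor <;> field_simp

end ThetaRatio

theorem exists_quadratic_of_isEvenDoublyPeriodic {τ s : ℂ} (hτ : τ.im ≠ 0) {f g h H : ℂ → ℂ}
    (hf : IsEvenDoublyPeriodic τ f) (hg : IsEvenDoublyPeriodic τ g) (hh : AnalyticAt ℂ h s)
    (hH : AnalyticAt ℂ H s) (hhH : h s = H s) (hH0 : H s ≠ 0)
    (hloc : ∀ᶠ q in 𝓝[≠] s, g q = h q / (q - s) ^ 2 ∧ f q = H q / (q - s))
    (hreg : ∀ q, ¬ InLattice τ (q - s) → ¬ InLattice τ (q + s) →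
      AnalyticAt ℂ f q ∧ AnalyticAt ℂ g q) :
    ∃ P : Polynomial ℂ, P.degree = 2 ∧
      ∀ q, ¬ InLattice τ (q - s) → ¬ InLattice τ (q + s) → g q = P.eval (f q) := by
  obtain ⟨α, β, hα, M, hM, hM'⟩ := exists_quadratic_sub_hasRemovableSingularityAt hh hH hhH hH0
  set G := fun q => g q - (α * f q ^ 2 + β * f q)
  have hGsym : IsEvenDoublyPeriodic τ G := hg.comp₂ hf fun u v => u - (α * v ^ 2 + β * v)
  have hGreg : ∀ q, ¬ InLattice τ (q - s) → ¬ InLattice τ (q + s) → AnalyticAt ℂ G q :=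
    fun q h1 h2 => by
      obtain ⟨hfq, hgq⟩ := hreg q h1 h2
      fun_prop
  have hGs : HasRemovableSingularityAt G s := ⟨M, hM, Filter.EventuallyEq.trans
    (hloc.mono fun q hq => show g q - _ = _ by rw [hq.1, hq.2]) hM'⟩
  have hGrem : ∀ z, HasRemovableSingularityAt G z := fun z => by
    by_cases hz : InLattice τ (z - s) ∨ InLattice τ (z + s)
    · exact hGs.of_inLattice hGsym hz
    · obtain ⟨h1, h2⟩ := not_or.1 hz
      exact ⟨G, hGreg z h1 h2, .rfl⟩
  obtain ⟨c, hc⟩ := exists_eq_const_of_periodic_of_removable hτ hGsym.periodic_one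
    hGsym.periodic_tau hGrem
  refine ⟨.C α * .X ^ 2 + .C β * .X + .C c, Polynomial.degree_quadratic hα, fun q h1 h2 => ?_⟩
  have hq := hc q (hGreg q h1 h2).continuousAt
  simp only [Polynomial.eval_add, Polynomial.eval_mul, Polynomial.eval_pow, Polynomial.eval_C,
    Polynomial.eval_X]
  linear_combination hq

theorem f_prime_p_is_polynomial_in_f_general
    (τ : ℂ) (hτ : 0 < τ.im) (θ : ℂ → ℂ)
    (hθdiff : Differentiable ℂ θ)
    (hθodd : ∀ z, θ (-z) = -θ z)
    (hθ1 : ∀ z, θ (z + 1) = -θ z)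
    (hθτ : ∀ z, θ (z + τ) = -Complex.exp (-(Real.pi : ℂ) * Complex.I * (τ + 2 * z)) * θ z)
    (hθzero : ∀ z, θ z = 0 ↔ InLattice τ z)
    (hθsimple : ∀ z, InLattice τ z → deriv θ z ≠ 0)
    (p x : ℂ)
    (h2p : ¬ InLattice τ (2 * p)) (h2x : ¬ InLattice τ (2 * x))
    (hsum : ¬ InLattice τ (2 * (p + x)))
    (F : ℂ → ℂ → ℂ)
    (hF : ∀ p' q, F p' q =
      θ (p' + q - x) * θ (q + x - p') / (θ (q - x - p') * θ (q + x + p')))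
    (fp : ℂ → ℂ) (hfp : ∀ q, fp q = deriv (fun p' => F p' q) p) :
    -- `f'_p` is elliptic in `q`
    (∀ q, fp (q + 1) = fp q ∧ fp (q + τ) = fp q) ∧
    -- analytic away from `q ≡ ±(x+p)` mod `Λ`
    (∀ q, ¬ InLattice τ (q - (x + p)) → ¬ InLattice τ (q + (x + p)) →
      DifferentiableAt ℂ fp q) ∧
    -- poles of order exactly 2 at `q ≡ ±(x+p)` mod `Λ`
    (∀ q₀, (InLattice τ (q₀ - (x + p)) ∨ InLattice τ (q₀ + (x + p))) →
      ∃ h : ℂ → ℂ, AnalyticAt ℂ h q₀ ∧ h q₀ ≠ 0 ∧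
        ∀ᶠ q in nhdsWithin q₀ {q₀}ᶜ, fp q = h q / (q - q₀) ^ 2) ∧
    -- `f'_p = P(f)` for a degree-2 polynomial `P`
    (∃ P : Polynomial ℂ, P.degree = 2 ∧
      ∀ q, ¬ InLattice τ (q - (x + p)) → ¬ InLattice τ (q + (x + p)) →
        fp q = P.eval (F p q)) := by
  obtain rfl : F = thetaRatio θ x := funext₂ hF
  obtain rfl : fp = thetaRatioDeriv θ x p := funext hfp
  have hθne : ∀ z, ¬ InLattice τ z → θ z ≠ 0 := fun z hz h0 => hz ((hθzero z).1 h0)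
  have hlat0 : InLattice τ 0 := ⟨0, 0, by simp⟩
  have hsym := isEvenDoublyPeriodic_thetaRatio hθodd hθ1 hθτ x
  have hsym' := IsEvenDoublyPeriodic.thetaRatioDeriv hsym p
  obtain ⟨h, H, hh, hH, hhH, hH0, hloc⟩ := exists_thetaRatio_laurent hθdiff
    ((hθzero 0).2 hlat0) (hθsimple 0 hlat0) (hθne _ h2p) (hθne _ h2x) (hθne _ hsum)
  have hreg : ∀ q, ¬ InLattice τ (q - (x + p)) → ¬ InLattice τ (q + (x + p)) →
      AnalyticAt ℂ (thetaRatio θ x p) q ∧ AnalyticAt ℂ (thetaRatioDeriv θ x p) q := by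
    intro q h1 h2
    have hc := hθne _ (sub_add_eq_sub_sub q x p ▸ h1)
    have hd := hθne _ (add_assoc q x p ▸ h2)
    exact ⟨analyticAt_thetaRatio hθdiff hc hd, analyticAt_thetaRatioDeriv hθdiff hc hd⟩
  refine ⟨fun q => ⟨hsym'.periodic_one q, hsym'.periodic_tau q⟩,
    fun q h1 h2 => (hreg q h1 h2).2.differentiableAt,
    fun q₀ hq₀ => HasDoublePoleAt.of_inLattice ⟨h, hh, hhH ▸ hH0, hloc.mono fun _ hq => hq.1⟩
      hsym' hq₀,
    exists_quadratic_of_isEvenDoublyPeriodic hτ.ne' (hsym p) hsym' hh hH hhH hH0 hloc hreg⟩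

/-- for `f(p,q,x) = θ(p+q-x)θ(q+x-p)/(θ(q-x-p)θ(q+x+p))`, the function
`f'_p = ∂f/∂p`, viewed as a function of `q`, is elliptic with poles of order 2 exactly at
`q ≡ ±(x+p) mod Λ`; consequently there is a degree-2 polynomial `P` (depending on `p, x`)
with `f'_p = P(f)` as meromorphic functions of `q`. -/
theorem f_prime_p_is_polynomial_in_f
    (τ : ℂ) (hτ : 0 < τ.im) (θ : ℂ → ℂ)
    (hθdiff : Differentiable ℂ θ)
    (hθodd : ∀ z, θ (-z) = -θ z)
    (hθ1 : ∀ z, θ (z + 1) = -θ z)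
    (hθτ : ∀ z, θ (z + τ) = -Complex.exp (-(Real.pi : ℂ) * Complex.I * (τ + 2 * z)) * θ z)
    (hθzero : ∀ z, θ z = 0 ↔ InLattice τ z)
    (hθsimple : ∀ z, InLattice τ z → deriv θ z ≠ 0)
    (p x : ℂ)
    (h2p : ¬ InLattice τ (2 * p)) (h2x : ¬ InLattice τ (2 * x))
    (hsum : ¬ InLattice τ (2 * (p + x))) (hdiff : ¬ InLattice τ (2 * (p - x)))
    (F : ℂ → ℂ → ℂ)
    (hF : ∀ p' q, F p' q =
      θ (p' + q - x) * θ (q + x - p') / (θ (q - x - p') * θ (q + x + p')))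
    (fp : ℂ → ℂ) (hfp : ∀ q, fp q = deriv (fun p' => F p' q) p) :
    -- `f'_p` is elliptic in `q`
    (∀ q, fp (q + 1) = fp q ∧ fp (q + τ) = fp q) ∧
    -- analytic away from `q ≡ ±(x+p)` mod `Λ`
    (∀ q, ¬ InLattice τ (q - (x + p)) → ¬ InLattice τ (q + (x + p)) →
      DifferentiableAt ℂ fp q) ∧
    -- poles of order exactly 2 at `q ≡ ±(x+p)` mod `Λ`
    (∀ q₀, (InLattice τ (q₀ - (x + p)) ∨ InLattice τ (q₀ + (x + p))) →
      ∃ h : ℂ → ℂ, AnalyticAt ℂ h q₀ ∧ h q₀ ≠ 0 ∧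
        ∀ᶠ q in nhdsWithin q₀ {q₀}ᶜ, fp q = h q / (q - q₀) ^ 2) ∧
    -- `f'_p = P(f)` for a degree-2 polynomial `P`
    (∃ P : Polynomial ℂ, P.degree = 2 ∧
      ∀ q, ¬ InLattice τ (q - (x + p)) → ¬ InLattice τ (q + (x + p)) →
        fp q = P.eval (F p q)) :=
  f_prime_p_is_polynomial_in_f_general τ hτ θ hθdiff hθodd hθ1 hθτ hθzero hθsimple p x h2p h2x hsum
    F hF fp hfp
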